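/- For the complete bipartite graph K_{n,m} with the shortest-path metric, the formal magnitude is Mag(K_{n,m})(q) = ((m+n) − (2mn − m − n)q) / ((1+q)(1 − (m−1)(n−1)q²)), and consequently lim_{q→1} Mag(K_{n,m})(q) = 1 for all m,n ≥ 1, where the case (m,n) = (2,2), in which the denominator vanishes at q=1, is handled by continuity. -/

import Mathlib

open Filter Topology

lemma sum_ite_const_mul {N : ℕ} (i : Fin N) (x y c : ℝ) :
    ∑ k : Fin N, (if i = k then x else y) * c = ((N:ℝ) - 1) * (y * c) + x * c := by
  have h : ∀ k : Fin N, (if i = k then x else y) * c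
      = y * c + (if i = k then x*c - y*c else 0) := by
    intro k; split <;> ring
  rw [Finset.sum_congr rfl (fun k _ => h k), Finset.sum_add_distrib,
    Finset.sum_const, Finset.sum_ite_eq]
  simp
  ring

lemma sum_ite_one {N : ℕ} (i : Fin N) (d e : ℝ) :
    ∑ k : Fin N, (if i = k then d else e) = ((N:ℝ) - 1) * e + d := by
  have := sum_ite_const_mul i d e 1
  simpa using this

lemma sum_ite_ite {N : ℕ} (i j : Fin N) (x y d e : ℝ) :
    ∑ k : Fin N, (if i = k then x else y) * (if k = j then d else e) =
      if i = j then x*d + ((N:ℝ)-1)*(y*e)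
      else x*e + y*d + ((N:ℝ)-2)*(y*e) := by
  by_cases hij : i = j
  · subst hij
    rw [if_pos rfl]
    have h : ∀ k : Fin N, (if i = k then x else y) * (if k = i then d else e)
        = y*e + (if i = k then x*d - y*e else 0) := by
      intro k
      by_cases hk : i = k
      · subst hk; simp
      · rw [if_neg hk, if_neg (fun h => hk h.symm), if_neg hk]; ring
    rw [Finset.sum_congr rfl (fun k _ => h k), Finset.sum_add_distrib,
      Finset.sum_const, Finset.sum_ite_eq]
    simp
    ring
  · rw [if_neg hij]
    have h : ∀ k : Fin N, (if i = k then x else y) * (if k = j then d else e)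
        = y*e + ((if i = k then (x-y)*e else 0) + (if j = k then y*(d-e) else 0)) := by
      intro k
      by_cases hk : i = k
      · subst hk
        rw [if_pos rfl, if_neg (fun h : i = j => hij h), if_pos rfl,
          if_neg (fun h : j = i => hij h.symm)]
        ring
      · by_cases hk2 : j = k
        · subst hk2
          rw [if_neg hk, if_pos rfl, if_neg hk, if_pos rfl]; ring
        · rw [if_neg hk, if_neg (fun h : k = j => hk2 h.symm), if_neg hk, if_neg hk2]; ring
    rw [Finset.sum_congr rfl (fun k _ => h k), Finset.sum_add_distrib, Finset.sum_const,
      Finset.sum_add_distrib, Finset.sum_ite_eq, Finset.sum_ite_eq]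
    simp
    ring

lemma sum_ite_const_mul' {N : ℕ} (j : Fin N) (d e c : ℝ) :
    ∑ k : Fin N, (if k = j then d else e) * c = ((N:ℝ) - 1) * (e * c) + d * c := by
  have h : ∀ k : Fin N, (if k = j then d else e) = (if j = k then d else e) := by
    intro k; simp [eq_comm]
  rw [Finset.sum_congr rfl (fun k _ => by rw [h k])]
  exact sum_ite_const_mul j d e c

/-- The similarity matrix of the complete bipartite graph `K_{n,m}` with the shortest-path
metric: distance `1` across parts, `2` between distinct vertices of the same part. -/
noncomputable def bipartiteSim (n m : ℕ) (q : ℝ) :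
    Matrix (Fin n ⊕ Fin m) (Fin n ⊕ Fin m) ℝ :=
  Matrix.of fun a b =>
    match a, b with
    | Sum.inl i, Sum.inl j => if i = j then 1 else q ^ 2
    | Sum.inr i, Sum.inr j => if i = j then 1 else q ^ 2
    | _, _ => q

noncomputable def bipartiteInv (n m : ℕ) (q : ℝ) :
    Matrix (Fin n ⊕ Fin m) (Fin n ⊕ Fin m) ℝ :=
  Matrix.of fun a b =>
    match a, b with
    | Sum.inl i, Sum.inl j =>
        if i = j then 1/(1-q^2) + q^2*((m:ℝ)-1)/((1-q^2)*(1-((m:ℝ)-1)*((n:ℝ)-1)*q^2))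
        else q^2*((m:ℝ)-1)/((1-q^2)*(1-((m:ℝ)-1)*((n:ℝ)-1)*q^2))
    | Sum.inr i, Sum.inr j =>
        if i = j then 1/(1-q^2) + q^2*((n:ℝ)-1)/((1-q^2)*(1-((m:ℝ)-1)*((n:ℝ)-1)*q^2))
        else q^2*((n:ℝ)-1)/((1-q^2)*(1-((m:ℝ)-1)*((n:ℝ)-1)*q^2))
    | _, _ => -q/((1-q^2)*(1-((m:ℝ)-1)*((n:ℝ)-1)*q^2))

lemma sim_mul_inv (n m : ℕ) (q : ℝ) (hs : 1 - q^2 ≠ 0)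
    (hK : 1 - ((m:ℝ)-1)*((n:ℝ)-1)*q^2 ≠ 0) :
    bipartiteSim n m q * bipartiteInv n m q = 1 := by
  ext a b
  cases a with
  | inl i =>
    cases b with
    | inl j =>
      rw [Matrix.mul_apply, Fintype.sum_sum_type]
      simp only [bipartiteSim, bipartiteInv, Matrix.of_apply, Matrix.one_apply,
        Sum.inl.injEq]
      rw [sum_ite_ite]
      simp only [Finset.sum_const, Finset.card_univ, Fintype.card_fin, nsmul_eq_mul]
      by_cases hij : i = j
      · rw [if_pos hij, if_pos hij]
        set D := 1 - ((m:ℝ)-1)*((n:ℝ)-1)*q^2 with hD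
        field_simp
        rw [hD]; ring
      · rw [if_neg hij, if_neg hij]
        set D := 1 - ((m:ℝ)-1)*((n:ℝ)-1)*q^2 with hD
        field_simp
        rw [hD]; ring
    | inr j =>
      rw [Matrix.mul_apply, Fintype.sum_sum_type]
      simp only [bipartiteSim, bipartiteInv, Matrix.of_apply, Matrix.one_apply]
      rw [sum_ite_const_mul]
      simp only [Finset.sum_const, Finset.card_univ, Fintype.card_fin, nsmul_eq_mul,
        reduceCtorEq, if_false]
      rw [Finset.sum_congr rfl (fun k (_ : k ∈ Finset.univ) =>
        (mul_comm (q : ℝ) _))]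
      rw [sum_ite_const_mul']
      set D := 1 - ((m:ℝ)-1)*((n:ℝ)-1)*q^2 with hD
      field_simp
      rw [hD]; ring
  | inr i =>
    cases b with
    | inl j =>
      rw [Matrix.mul_apply, Fintype.sum_sum_type]
      simp only [bipartiteSim, bipartiteInv, Matrix.of_apply, Matrix.one_apply]
      simp only [reduceCtorEq, if_false]
      rw [Finset.sum_congr rfl (fun k (_ : k ∈ Finset.univ) =>
        (mul_comm (q : ℝ) _))]
      rw [sum_ite_const_mul', sum_ite_const_mul]
      set D := 1 - ((m:ℝ)-1)*((n:ℝ)-1)*q^2 with hD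
      field_simp
      rw [hD]; ring
    | inr j =>
      rw [Matrix.mul_apply, Fintype.sum_sum_type]
      simp only [bipartiteSim, bipartiteInv, Matrix.of_apply, Matrix.one_apply,
        Sum.inr.injEq]
      rw [sum_ite_ite]
      simp only [Finset.sum_const, Finset.card_univ, Fintype.card_fin, nsmul_eq_mul]
      by_cases hij : i = j
      · rw [if_pos hij, if_pos hij]
        set D := 1 - ((m:ℝ)-1)*((n:ℝ)-1)*q^2 with hD
        field_simp
        rw [hD]; ring
      · rw [if_neg hij, if_neg hij]
        set D := 1 - ((m:ℝ)-1)*((n:ℝ)-1)*q^2 with hD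
        field_simp
        rw [hD]; ring

lemma sum_inv_entries (n m : ℕ) (q : ℝ) (hs : 1 - q^2 ≠ 0)
    (hK : 1 - ((m:ℝ)-1)*((n:ℝ)-1)*q^2 ≠ 0) :
    ∑ a, ∑ b, bipartiteInv n m q a b =
      (((m : ℝ) + n) - (2 * m * n - m - n) * q) /
        ((1 + q) * (1 - ((m : ℝ) - 1) * ((n : ℝ) - 1) * q ^ 2)) := by
  have h1 : (1 : ℝ) + q ≠ 0 := by
    intro h
    apply hs
    have : q = -1 := by linarith
    rw [this]; ring
  have h2 : (1 : ℝ) - q ≠ 0 := by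
    intro h
    apply hs
    have : q = 1 := by linarith
    rw [this]; ring
  rw [Fintype.sum_sum_type]
  simp only [bipartiteInv, Matrix.of_apply, Fintype.sum_sum_type]
  have e1 : ∀ i : Fin n, ∑ j : Fin n,
      (if i = j then 1/(1-q^2) + q^2*((m:ℝ)-1)/((1-q^2)*(1-((m:ℝ)-1)*((n:ℝ)-1)*q^2))
        else q^2*((m:ℝ)-1)/((1-q^2)*(1-((m:ℝ)-1)*((n:ℝ)-1)*q^2))) =
      ((n:ℝ)-1) * (q^2*((m:ℝ)-1)/((1-q^2)*(1-((m:ℝ)-1)*((n:ℝ)-1)*q^2)))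
        + (1/(1-q^2) + q^2*((m:ℝ)-1)/((1-q^2)*(1-((m:ℝ)-1)*((n:ℝ)-1)*q^2))) := by
    intro i; exact sum_ite_one i _ _
  have e2 : ∀ i : Fin m, ∑ j : Fin m,
      (if i = j then 1/(1-q^2) + q^2*((n:ℝ)-1)/((1-q^2)*(1-((m:ℝ)-1)*((n:ℝ)-1)*q^2))
        else q^2*((n:ℝ)-1)/((1-q^2)*(1-((m:ℝ)-1)*((n:ℝ)-1)*q^2))) =
      ((m:ℝ)-1) * (q^2*((n:ℝ)-1)/((1-q^2)*(1-((m:ℝ)-1)*((n:ℝ)-1)*q^2)))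
        + (1/(1-q^2) + q^2*((n:ℝ)-1)/((1-q^2)*(1-((m:ℝ)-1)*((n:ℝ)-1)*q^2))) := by
    intro i; exact sum_ite_one i _ _
  simp only [Finset.sum_add_distrib, Finset.sum_const, Finset.card_univ,
    Fintype.card_fin, nsmul_eq_mul]
  rw [Finset.sum_congr rfl (fun i _ => e1 i), Finset.sum_congr rfl (fun i _ => e2 i)]
  simp only [Finset.sum_add_distrib, Finset.sum_const, Finset.card_univ,
    Fintype.card_fin, nsmul_eq_mul]
  set D := 1 - ((m:ℝ)-1)*((n:ℝ)-1)*q^2 with hD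
  field_simp
  rw [hD]; ring

lemma K_ne_zero_of_isUnit (n m : ℕ) (hn : 1 ≤ n) (hm : 1 ≤ m) (q : ℝ)
    (h : IsUnit (bipartiteSim n m q).det) :
    1 - ((m:ℝ)-1)*((n:ℝ)-1)*q^2 ≠ 0 := by
  intro hK0
  set v : Fin n ⊕ Fin m → ℝ :=
    Sum.elim (fun _ => (m:ℝ)*q) (fun _ => -(1+((n:ℝ)-1)*q^2)) with hvdef
  have hv : (bipartiteSim n m q).mulVec v = 0 := by
    funext a
    cases a with
    | inl i =>
      simp only [Matrix.mulVec, dotProduct, Fintype.sum_sum_type, bipartiteSim,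
        Matrix.of_apply, Sum.elim_inl, Sum.elim_inr, hvdef, Pi.zero_apply]
      rw [sum_ite_const_mul]
      simp only [Finset.sum_const, Finset.card_univ, Fintype.card_fin, nsmul_eq_mul]
      ring
    | inr i =>
      simp only [Matrix.mulVec, dotProduct, Fintype.sum_sum_type, bipartiteSim,
        Matrix.of_apply, Sum.elim_inl, Sum.elim_inr, hvdef, Pi.zero_apply]
      rw [sum_ite_const_mul]
      simp only [Finset.sum_const, Finset.card_univ, Fintype.card_fin, nsmul_eq_mul]
      linear_combination (q^2 - 1) * hK0
  have hv0 : v = 0 := by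
    have h1 : (bipartiteSim n m q)⁻¹ * bipartiteSim n m q = 1 :=
      Matrix.nonsing_inv_mul _ h
    calc v = (1 : Matrix (Fin n ⊕ Fin m) (Fin n ⊕ Fin m) ℝ).mulVec v := by
            simp
      _ = ((bipartiteSim n m q)⁻¹ * bipartiteSim n m q).mulVec v := by rw [h1]
      _ = (bipartiteSim n m q)⁻¹.mulVec ((bipartiteSim n m q).mulVec v) := by
            rw [← Matrix.mulVec_mulVec]
      _ = 0 := by rw [hv]; simp
  have hval : v (Sum.inr ⟨0, hm⟩) = 0 := by rw [hv0]; rfl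
  simp only [hvdef, Sum.elim_inr] at hval
  have hn' : (1:ℝ) ≤ (n:ℝ) := by exact_mod_cast hn
  nlinarith [sq_nonneg q]

open Filter Topology

/-- Magnitude of `K_{n,m}`: the formula
`Mag(K_{n,m})(q) = ((m+n) − (2mn − m − n)q)/((1+q)(1 − (m−1)(n−1)q²))`
holds where the matrix is invertible, and the limit as `q → 1` is `1`. -/
theorem mag_completeBipartite (n m : ℕ) (hn : 1 ≤ n) (hm : 1 ≤ m) :
    (∀ q ∈ Set.Ioo (0 : ℝ) 1, IsUnit (bipartiteSim n m q).det →
      ∑ a, ∑ b, (bipartiteSim n m q)⁻¹ a b =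
        (((m : ℝ) + n) - (2 * m * n - m - n) * q) /
          ((1 + q) * (1 - ((m : ℝ) - 1) * ((n : ℝ) - 1) * q ^ 2))) ∧
    Tendsto (fun q : ℝ => ∑ a, ∑ b, (bipartiteSim n m q)⁻¹ a b)
      (𝓝[Set.Ioo (0 : ℝ) 1] 1) (𝓝 1) := by
  have key : ∀ q : ℝ, 1 - q^2 ≠ 0 → 1 - ((m:ℝ)-1)*((n:ℝ)-1)*q^2 ≠ 0 →
      ∑ a, ∑ b, (bipartiteSim n m q)⁻¹ a b =
        (((m : ℝ) + n) - (2 * m * n - m - n) * q) /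
          ((1 + q) * (1 - ((m : ℝ) - 1) * ((n : ℝ) - 1) * q ^ 2)) := by
    intro q hs hK
    rw [Matrix.inv_eq_right_inv (sim_mul_inv n m q hs hK)]
    exact sum_inv_entries n m q hs hK
  have hsIoo : ∀ q ∈ Set.Ioo (0:ℝ) 1, 1 - q^2 ≠ 0 := by
    intro q hq
    nlinarith [hq.1, hq.2]
  constructor
  · intro q hq hunit
    exact key q (hsIoo q hq) (K_ne_zero_of_isUnit n m hn hm q hunit)
  · by_cases hk : ((m:ℝ)-1)*((n:ℝ)-1) = 1
    · -- exceptional case: m = n = 2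
      have hmn : m = 2 ∧ n = 2 := by
        have h1 : (((m-1)*(n-1) : ℕ) : ℝ) = ((1:ℕ) : ℝ) := by
          push_cast [Nat.cast_sub hm, Nat.cast_sub hn]
          simpa using hk
        have h2 : (m-1)*(n-1) = 1 := Nat.cast_injective h1
        have h3 : m - 1 = 1 := Nat.eq_one_of_mul_eq_one_right h2
        have h4 : n - 1 = 1 := Nat.eq_one_of_mul_eq_one_left h2
        omega
      obtain ⟨hm2, hn2⟩ := hmn
      subst hm2; subst hn2
      have heq : ∀ᶠ q in 𝓝[Set.Ioo (0:ℝ) 1] 1,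
          4/(1+q)^2 = (∑ a, ∑ b, (bipartiteSim 2 2 q)⁻¹ a b) := by
        filter_upwards [eventually_mem_nhdsWithin] with q hq
        have hs := hsIoo q hq
        have hK' : 1 - (((2:ℕ):ℝ)-1)*(((2:ℕ):ℝ)-1)*q^2 ≠ 0 := by
          push_cast
          nlinarith [hq.1, hq.2]
        rw [key q hs hK']
        have h1 : (1 : ℝ) + q ≠ 0 := by nlinarith [hq.1]
        have h2 : (1 : ℝ) - q ≠ 0 := by nlinarith [hq.2]
        push_cast
        rw [div_eq_div_iff (pow_ne_zero 2 h1)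
          (mul_ne_zero h1 (by intro h; exact hK' (by push_cast at h ⊢; linarith)))]
        ring
      refine Tendsto.congr' heq ?_
      have hc : ContinuousAt (fun q : ℝ => 4/(1+q)^2) 1 := by
        apply ContinuousAt.div
        · fun_prop
        · fun_prop
        · norm_num
      have := hc.tendsto.mono_left (nhdsWithin_le_nhds (s := Set.Ioo (0:ℝ) 1))
      convert this using 2
      norm_num
    · -- generic case
      have hK1 : (1:ℝ) - ((m:ℝ)-1)*((n:ℝ)-1) ≠ 0 := sub_ne_zero.mpr (Ne.symm hk)
      have hKcont : ContinuousAt (fun q : ℝ => 1 - ((m:ℝ)-1)*((n:ℝ)-1)*q^2) 1 := by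
        fun_prop
      have hKev : ∀ᶠ q in 𝓝 (1:ℝ), 1 - ((m:ℝ)-1)*((n:ℝ)-1)*q^2 ≠ 0 := by
        apply hKcont.eventually_ne
        simpa using hK1
      have heq : ∀ᶠ q in 𝓝[Set.Ioo (0:ℝ) 1] 1,
          (∑ a, ∑ b, (bipartiteSim n m q)⁻¹ a b) =
            (((m : ℝ) + n) - (2 * m * n - m - n) * q) /
              ((1 + q) * (1 - ((m : ℝ) - 1) * ((n : ℝ) - 1) * q ^ 2)) := by
        filter_upwards [eventually_mem_nhdsWithin,
          hKev.filter_mono nhdsWithin_le_nhds] with q hq hKq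
        exact key q (hsIoo q hq) hKq
      refine Tendsto.congr' (Filter.EventuallyEq.symm heq) ?_
      have hden : ((1:ℝ) + 1) * (1 - ((m:ℝ)-1)*((n:ℝ)-1)*1^2) ≠ 0 := by
        apply mul_ne_zero (by norm_num)
        simpa using hK1
      have hc : ContinuousAt (fun q : ℝ =>
          (((m : ℝ) + n) - (2 * m * n - m - n) * q) /
            ((1 + q) * (1 - ((m : ℝ) - 1) * ((n : ℝ) - 1) * q ^ 2))) 1 := by
        apply ContinuousAt.div
        · fun_prop
        · fun_prop
        · exact hden
      have h1 : (((m : ℝ) + n) - (2 * m * n - m - n) * 1) /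
          ((1 + 1) * (1 - ((m : ℝ) - 1) * ((n : ℝ) - 1) * 1 ^ 2)) = 1 := by
        rw [div_eq_one_iff_eq hden]
        ring
      have := hc.tendsto.mono_left (nhdsWithin_le_nhds (s := Set.Ioo (0:ℝ) 1))
      convert this using 2
      rw [h1]
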